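/- Let X be a right A-Galois object. With σ'_X(x) := δ_X·σ_X(x)·δ_X⁻¹ the modular automorphism of ψ_X, the following hold: (i) α ∘ σ'_X = (σ'_X ⊗ S⁻²) ∘ α; (ii) for all a ∈ A, β(S⁻¹(σ(a))) = (σ_X ⊗ id)(Σ(β(a))), where Σ is the flip map on X ⊗ X; in Sweedler-type notation, (S⁻¹σ(a))^[1] ⊗ (S⁻¹σ(a))^[2] = σ_X(a^[2]) ⊗ a^[1]. -/

import Mathlib

open TensorProduct

noncomputable section

variable (k : Type*) [Field k]

/-- Apply a linear functional to the second tensor factor. -/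
def applySnd {M N : Type*} [AddCommGroup M] [Module k M]
    [AddCommGroup N] [Module k N] (f : N →ₗ[k] k) : M ⊗[k] N →ₗ[k] M :=
  (TensorProduct.rid k M).toLinearMap ∘ₗ LinearMap.lTensor M f

/-- Apply a linear functional to the first tensor factor. -/
def applyFst {M N : Type*} [AddCommGroup M] [Module k M]
    [AddCommGroup N] [Module k N] (f : M →ₗ[k] k) : M ⊗[k] N →ₗ[k] N :=
  (TensorProduct.lid k N).toLinearMap ∘ₗ LinearMap.rTensor N f

variable (A X : Type*) [Ring A] [HopfAlgebra k A] [Ring X] [Algebra k X]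

/-- The Galois map `V : X ⊗ X → X ⊗ A`, `x ⊗ y ↦ (x ⊗ 1) * α y`. -/
def galoisV (α : X →ₐ[k] X ⊗[k] A) : X ⊗[k] X →ₗ[k] X ⊗[k] A :=
  LinearMap.mul' k (X ⊗[k] A) ∘ₗ
    TensorProduct.map ((TensorProduct.mk k X A).flip 1) α.toLinearMap

/-- A Hopf algebra with bijective antipode and faithful left integral `φ`,
together with a right Galois coaction `α` on `X` with trivial coinvariants. -/
structure GaloisContext where
  φ : A →ₗ[k] k
  φ_ne : φ ≠ 0
  φ_integral : ∀ a : A, applySnd k φ (Coalgebra.comul a) = φ a • (1 : A)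
  φ_faithful_left : ∀ a : A, (∀ b : A, φ (a * b) = 0) → a = 0
  φ_faithful_right : ∀ a : A, (∀ b : A, φ (b * a) = 0) → a = 0
  antipode_bijective : Function.Bijective (HopfAlgebra.antipode (R := k) (A := A))
  α : X →ₐ[k] X ⊗[k] A
  coassoc : ∀ x : X,
    TensorProduct.assoc k X A A ((LinearMap.rTensor A α.toLinearMap) (α x))
      = LinearMap.lTensor X (Coalgebra.comul (R := k) (A := A)) (α x)
  counit_id : ∀ x : X,
    applySnd k (Coalgebra.counit (R := k) (A := A)) (α x) = x
  coinv_trivial : ∀ x : X, α x = x ⊗ₜ[k] (1 : A) → ∃ c : k, x = c • (1 : X)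
  galois : Function.Bijective (galoisV k A X α)

variable {k A X}

/-- The Galois map as a linear equivalence. -/
def GaloisContext.V (G : GaloisContext k A X) : (X ⊗[k] X) ≃ₗ[k] (X ⊗[k] A) :=
  LinearEquiv.ofBijective (galoisV k A X G.α) G.galois

/-- The map `β : A → X ⊗ X`, `a ↦ V⁻¹(1 ⊗ a)`. -/
def GaloisContext.β (G : GaloisContext k A X) : A →ₗ[k] X ⊗[k] X :=
  G.V.symm.toLinearMap ∘ₗ TensorProduct.mk k X A 1

end

/-!
Besides the Galois map `V (x ⊗ y) = (x ⊗ 1) α(y)` consider `V' (x ⊗ y) = α(x) (y ⊗ 1)`.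
Coassociativity and the antipode axiom give `V' = m ∘ (α ⊗ id) ∘ V` with
`m ((x ⊗ b) ⊗ c) = x ⊗ b S(c)` (`contractAntipode`). Hence `V' (β a) = 1 ⊗ S(a)`, and
invariance of `ψ_X` gives `(ψ_X ⊗ id) ∘ V' = S ∘ (ψ_X ⊗ id) ∘ V`, i.e.
`ψ_X(x₍₀₎ y) x₍₁₎ = S(ψ_X(x y₍₀₎) y₍₁₎)`.

Both formulas are then checked after applying `ψ_X(y ·) ⊗ id`, resp. `φ_X(z ·) ⊗ id`, which
separate points because `φ` is faithful. For (i) the formula above and the fact that `σ'_X` is the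
modular automorphism of `ψ_X` suffice. For (ii), `V' (β a) = 1 ⊗ S(a)` turns
`φ_X(z a^[1]) a^[2]` into `(id ⊗ φ)(α(z) (1 ⊗ S a))`, left invariance of `φ` turns
`φ_X(a^[2] z) a^[1]` into `(id ⊗ φ)((1 ⊗ a) α(z))`, and `σ`, `σ_X` exchange the two.
-/

section

open TensorProduct LinearMap HopfAlgebra

variable {k : Type*} [Field k]

section Slices

variable {M N : Type*} [AddCommGroup M] [Module k M] [AddCommGroup N] [Module k N]

@[simp] lemma applySnd_tmul (f : N →ₗ[k] k) (m : M) (n : N) :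
    applySnd k f (m ⊗ₜ[k] n) = f n • m := by
  simp [applySnd]

@[simp] lemma applyFst_tmul (f : M →ₗ[k] k) (m : M) (n : N) :
    applyFst k f (m ⊗ₜ[k] n) = f m • n := by
  simp [applyFst]

lemma apply_applySnd_eq_apply_applyFst (f : M →ₗ[k] k) (g : N →ₗ[k] k) (w : M ⊗[k] N) :
    f (applySnd k g w) = g (applyFst k f w) := by
  induction w using TensorProduct.induction_on with
  | zero => simp
  | tmul m n => simp [mul_comm]
  | add x y hx hy => simp [hx, hy]

lemma applyFst_comm (f : N →ₗ[k] k) (w : M ⊗[k] N) :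
    applyFst k f (TensorProduct.comm k M N w) = applySnd k f w := by
  induction w using TensorProduct.induction_on with
  | zero => simp
  | tmul m n => simp
  | add x y hx hy => simp [hx, hy]

lemma applyFst_map {P Q : Type*} [AddCommGroup P] [Module k P] [AddCommGroup Q] [Module k Q]
    (f : P →ₗ[k] k) (g : M →ₗ[k] P) (h : N →ₗ[k] Q) (w : M ⊗[k] N) :
    applyFst k f (TensorProduct.map g h w) = h (applyFst k (f ∘ₗ g) w) := by
  induction w using TensorProduct.induction_on with
  | zero => simp
  | tmul m n => simp
  | add x y hx hy => simp [hx, hy]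

lemma eq_zero_of_forall_applySnd_eq_zero {ι : Type*} (f : ι → N →ₗ[k] k)
    (hf : ∀ n, (∀ i, f i n = 0) → n = 0) (w : M ⊗[k] N)
    (hw : ∀ i, applySnd k (f i) w = 0) : w = 0 := by
  classical
  apply (equivFinsuppOfBasisLeft (Module.Basis.ofVectorSpace k M)).injective
  ext j
  rw [map_zero, Finsupp.zero_apply, equivFinsuppOfBasisLeft_apply]
  refine hf _ fun i => ?_
  change f i (applyFst k _ w) = 0
  rw [← apply_applySnd_eq_apply_applyFst, hw i, map_zero]

lemma eq_zero_of_forall_applyFst_eq_zero {ι : Type*} (f : ι → M →ₗ[k] k)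
    (hf : ∀ m, (∀ i, f i m = 0) → m = 0) (w : M ⊗[k] N)
    (hw : ∀ i, applyFst k (f i) w = 0) : w = 0 := by
  classical
  apply (equivFinsuppOfBasisRight (Module.Basis.ofVectorSpace k N)).injective
  ext j
  rw [map_zero, Finsupp.zero_apply, equivFinsuppOfBasisRight_apply]
  refine hf _ fun i => ?_
  change f i (applySnd k _ w) = 0
  rw [apply_applySnd_eq_apply_applyFst, hw i, map_zero]

end Slices

section AlgebraSlices

variable {B C : Type*} [Ring B] [Algebra k B] [Ring C] [Algebra k C]

lemma applySnd_mul_tmul (f : C →ₗ[k] k) (w : B ⊗[k] C) (b : B) (c : C) :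
    applySnd k f (w * (b ⊗ₜ[k] c)) = applySnd k (f ∘ₗ mulRight k c) w * b := by
  induction w using TensorProduct.induction_on with
  | zero => simp
  | tmul p q => simp [Algebra.TensorProduct.tmul_mul_tmul]
  | add x y hx hy => simp [add_mul, hx, hy]

lemma applySnd_tmul_mul (f : C →ₗ[k] k) (b : B) (c : C) (w : B ⊗[k] C) :
    applySnd k f ((b ⊗ₜ[k] c) * w) = b * applySnd k (f ∘ₗ mulLeft k c) w := by
  induction w using TensorProduct.induction_on with
  | zero => simp
  | tmul p q => simp [Algebra.TensorProduct.tmul_mul_tmul]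
  | add x y hx hy => simp [mul_add, hx, hy]

lemma applyFst_mul_tmul (f : B →ₗ[k] k) (w : B ⊗[k] C) (b : B) (c : C) :
    applyFst k f (w * (b ⊗ₜ[k] c)) = applyFst k (f ∘ₗ mulRight k b) w * c := by
  induction w using TensorProduct.induction_on with
  | zero => simp
  | tmul p q => simp [Algebra.TensorProduct.tmul_mul_tmul]
  | add x y hx hy => simp [add_mul, hx, hy]

lemma applyFst_tmul_mul (f : B →ₗ[k] k) (b : B) (c : C) (w : B ⊗[k] C) :
    applyFst k f ((b ⊗ₜ[k] c) * w) = c * applyFst k (f ∘ₗ mulLeft k b) w := by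
  induction w using TensorProduct.induction_on with
  | zero => simp
  | tmul p q => simp [Algebra.TensorProduct.tmul_mul_tmul]
  | add x y hx hy => simp [mul_add, hx, hy]

lemma applySnd_one_tmul_mul_of_modular (f : C →ₗ[k] k) (σ : C ≃ₐ[k] C)
    (hσ : ∀ a b : C, f (a * b) = f (b * σ a)) (c : C) (w : B ⊗[k] C) :
    applySnd k f (((1 : B) ⊗ₜ[k] c) * w) = applySnd k f (w * ((1 : B) ⊗ₜ[k] σ c)) := by
  induction w using TensorProduct.induction_on with
  | zero => simp
  | tmul p q => simp [Algebra.TensorProduct.tmul_mul_tmul, hσ c q]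
  | add x y hx hy => simp [mul_add, add_mul, hx, hy]

lemma modular_of_right_mul_unit (φ ψ : B →ₗ[k] k) (δ : Bˣ) (hδ : ∀ x : B, φ (x * δ) = ψ x)
    (σ : B ≃ₐ[k] B) (hσ : ∀ x y : B, φ (y * σ x) = φ (x * y)) (v x : B) :
    ψ (v * (δ * σ x * ↑δ⁻¹)) = ψ (x * v) := by
  rw [← hδ, ← hδ, mul_assoc, Units.inv_mul_cancel_right, ← mul_assoc, hσ, mul_assoc]

end AlgebraSlices

def contractAntipode (A X : Type*) [Ring A] [HopfAlgebra k A] [AddCommGroup X] [Module k X] :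
    (X ⊗[k] A) ⊗[k] A →ₗ[k] X ⊗[k] A :=
  lTensor X (mul' k A ∘ₗ lTensor A (antipode k)) ∘ₗ (TensorProduct.assoc k X A A).toLinearMap

section Antipode

variable {A X : Type*} [Ring A] [HopfAlgebra k A]

section Module

variable [AddCommGroup X] [Module k X]

@[simp] lemma contractAntipode_tmul (x : X) (b c : A) :
    contractAntipode A X ((x ⊗ₜ[k] b) ⊗ₜ[k] c) = x ⊗ₜ[k] (b * antipode k c) := by
  simp [contractAntipode]

lemma applyFst_contractAntipode_tmul (f : X →ₗ[k] k) (t : X ⊗[k] A) (c : A) :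
    applyFst k f (contractAntipode A X (t ⊗ₜ[k] c)) = applyFst k f t * antipode k c := by
  induction t using TensorProduct.induction_on with
  | zero => simp
  | tmul x b => simp
  | add s t hs ht => simp [add_tmul, hs, ht, add_mul]

lemma lTensor_linearMap_counit (w : X ⊗[k] A) :
    lTensor X (Algebra.linearMap k A ∘ₗ Coalgebra.counit) w
      = applySnd k Coalgebra.counit w ⊗ₜ[k] (1 : A) := by
  induction w using TensorProduct.induction_on with
  | zero => simp
  | tmul x a => simp [Algebra.algebraMap_eq_smul_one, smul_tmul]
  | add v w hv hw => simp [hv, hw, add_tmul]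

end Module

lemma contractAntipode_tmul_one_mul [Ring X] [Algebra k X] (w : X ⊗[k] A)
    (t : (X ⊗[k] A) ⊗[k] A) :
    contractAntipode A X ((w ⊗ₜ[k] (1 : A)) * t) = w * contractAntipode A X t := by
  induction t using TensorProduct.induction_on with
  | zero => simp
  | tmul s c =>
    rw [Algebra.TensorProduct.tmul_mul_tmul, one_mul]
    induction s using TensorProduct.induction_on with
    | zero => simp
    | tmul x b =>
      induction w using TensorProduct.induction_on with
      | zero => simp
      | tmul x' b' => simp [Algebra.TensorProduct.tmul_mul_tmul, mul_assoc]
      | add v w hv hw => rw [add_mul, add_tmul, map_add, hv, hw, add_mul]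
    | add s s' hs hs' => rw [mul_add, add_tmul, map_add, hs, hs', add_tmul, map_add, mul_add]
  | add t t' ht ht' => simp [mul_add, ht, ht']

end Antipode

namespace GaloisContext

variable {A X : Type*} [Ring A] [HopfAlgebra k A] [Ring X] [Algebra k X]
  (G : GaloisContext k A X)

def V' : X ⊗[k] X →ₗ[k] X ⊗[k] A :=
  mul' k (X ⊗[k] A) ∘ₗ TensorProduct.map G.α.toLinearMap ((TensorProduct.mk k X A).flip 1)

lemma V_tmul (x y : X) : G.V (x ⊗ₜ[k] y) = (x ⊗ₜ[k] (1 : A)) * G.α y := by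
  simp [GaloisContext.V, galoisV]

lemma V'_tmul (x y : X) : G.V' (x ⊗ₜ[k] y) = G.α x * (y ⊗ₜ[k] (1 : A)) := by
  simp [V']

lemma V_β (a : A) : G.V (G.β a) = (1 : X) ⊗ₜ[k] a := by
  simp [GaloisContext.β]

lemma V_mul_one_tmul (u : X ⊗[k] X) (x : X) :
    G.V (u * ((1 : X) ⊗ₜ[k] x)) = G.V u * G.α x := by
  induction u using TensorProduct.induction_on with
  | zero => simp
  | tmul p q => simp [V_tmul, Algebra.TensorProduct.tmul_mul_tmul, mul_assoc]
  | add u v hu hv => simp [add_mul, hu, hv]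

lemma rTensor_α_mul (w w' : X ⊗[k] A) :
    rTensor A G.α.toLinearMap (w * w')
      = rTensor A G.α.toLinearMap w * rTensor A G.α.toLinearMap w' :=
  map_mul (Algebra.TensorProduct.map G.α (AlgHom.id k A)) w w'

lemma contractAntipode_rTensor_α (y : X) :
    contractAntipode A X (rTensor A G.α.toLinearMap (G.α y)) = y ⊗ₜ[k] (1 : A) := by
  rw [contractAntipode, comp_apply, LinearEquiv.coe_coe, G.coassoc, ← lTensor_comp_apply,
    comp_assoc, mul_antipode_lTensor_comul, lTensor_linearMap_counit, G.counit_id]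

lemma V'_eq_contractAntipode_V (u : X ⊗[k] X) :
    G.V' u = contractAntipode A X (rTensor A G.α.toLinearMap (G.V u)) := by
  induction u using TensorProduct.induction_on with
  | zero => simp
  | tmul x y =>
    rw [V'_tmul, V_tmul, rTensor_α_mul, rTensor_tmul, contractAntipode_tmul_one_mul,
      contractAntipode_rTensor_α]
    rfl
  | add u v hu hv => simp [hu, hv]

lemma V'_β (a : A) : G.V' (G.β a) = (1 : X) ⊗ₜ[k] antipode k a := by
  rw [V'_eq_contractAntipode_V, V_β, rTensor_tmul, AlgHom.toLinearMap_apply, map_one,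
    Algebra.TensorProduct.one_def, contractAntipode_tmul, one_mul]

section Invariant

variable (ψX : X →ₗ[k] k) (hψX : ∀ x : X, applyFst k ψX (G.α x) = ψX x • (1 : A))
include hψX

lemma applyFst_V' (u : X ⊗[k] X) :
    applyFst k ψX (G.V' u) = antipode k (applyFst k ψX (G.V u)) := by
  rw [V'_eq_contractAntipode_V]
  induction G.V u using TensorProduct.induction_on with
  | zero => simp
  | tmul x c => simp [applyFst_contractAntipode_tmul, hψX]
  | add v w hv hw => simp [hv, hw]

lemma applyFst_mulRight_α (x y : X) :
    applyFst k (ψX ∘ₗ mulRight k y) (G.α x)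
      = antipode k (applyFst k (ψX ∘ₗ mulLeft k x) (G.α y)) := by
  simpa [V'_tmul, V_tmul, applyFst_mul_tmul, applyFst_tmul_mul] using
    G.applyFst_V' ψX hψX (x ⊗ₜ y)

end Invariant

section LeftInvariant

variable (φX : X →ₗ[k] k) (hφX : ∀ x : X, applySnd k G.φ (G.α x) = φX x • (1 : X))
include hφX

lemma applySnd_φ_V (u : X ⊗[k] X) : applySnd k G.φ (G.V u) = applySnd k φX u := by
  induction u using TensorProduct.induction_on with
  | zero => simp
  | tmul x y => simp [V_tmul, applySnd_tmul_mul, hφX]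
  | add u v hu hv => simp [hu, hv]

lemma applySnd_mulRight_β (a : A) (x : X) :
    applySnd k (φX ∘ₗ mulRight k x) (G.β a) = applySnd k G.φ (((1 : X) ⊗ₜ[k] a) * G.α x) := by
  rw [← G.V_β, ← V_mul_one_tmul, G.applySnd_φ_V φX hφX, applySnd_mul_tmul, mul_one]

lemma applyFst_mulLeft_eq_applySnd_V' (z : X) (u : X ⊗[k] X) :
    applyFst k (φX ∘ₗ mulLeft k z) u = applySnd k G.φ (G.α z * G.V' u) := by
  induction u using TensorProduct.induction_on with
  | zero => simp
  | tmul p q =>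
    rw [V'_tmul, ← mul_assoc, ← map_mul, applySnd_mul_tmul, mulRight_one, comp_id, hφX]
    simp
  | add u v hu hv => simp [mul_add, hu, hv]

lemma applyFst_mulLeft_β (z : X) (a : A) :
    applyFst k (φX ∘ₗ mulLeft k z) (G.β a)
      = applySnd k G.φ (G.α z * ((1 : X) ⊗ₜ[k] antipode k a)) := by
  rw [G.applyFst_mulLeft_eq_applySnd_V' φX hφX, V'_β]

lemma eq_zero_of_forall_φX_mul_eq_zero (u : X) (h : ∀ z : X, φX (z * u) = 0) : u = 0 := by
  have hα : G.α u = 0 := by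
    refine eq_zero_of_forall_applySnd_eq_zero (fun b => G.φ ∘ₗ mulLeft k b) G.φ_faithful_right
      _ fun b => ?_
    have hu : φX ∘ₗ mulRight k u = 0 := LinearMap.ext h
    have := G.applySnd_mulRight_β φX hφX b u
    rw [hu, applySnd_tmul_mul, one_mul] at this
    exact this.symm.trans (by simp [applySnd])
  simpa [hα, applySnd] using (G.counit_id u).symm

end LeftInvariant

section Modular

variable (φX ψX : X →ₗ[k] k) (δX : Xˣ) (hδX : ∀ x : X, φX (x * δX) = ψX x)
  (σX : X ≃ₐ[k] X) (hσX : ∀ x y : X, φX (y * σX x) = φX (x * y))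

include hδX in
lemma eq_zero_of_forall_ψX_mul_eq_zero
    (hφX : ∀ x : X, applySnd k G.φ (G.α x) = φX x • (1 : X))
    (u : X) (h : ∀ y : X, ψX (y * u) = 0) : u = 0 := by
  have hu : u * δX = 0 :=
    G.eq_zero_of_forall_φX_mul_eq_zero φX hφX _ fun z => by rw [← mul_assoc, hδX, h]
  simpa using congrArg (· * ((δX⁻¹ : Xˣ) : X)) hu

include hδX hσX in
theorem α_conj_σX (hφX : ∀ x : X, applySnd k G.φ (G.α x) = φX x • (1 : X))
    (hψX : ∀ x : X, applyFst k ψX (G.α x) = ψX x • (1 : A))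
    (Sinv : A →ₗ[k] A) (hSinv : ∀ a : A, Sinv (antipode k a) = a) (x : X) :
    G.α (δX * σX x * ↑δX⁻¹)
      = TensorProduct.map (mulLeft k (δX : X) ∘ₗ mulRight k (↑δX⁻¹ : X) ∘ₗ σX.toLinearMap)
          (Sinv ∘ₗ Sinv) (G.α x) := by
  rw [← sub_eq_zero]
  refine eq_zero_of_forall_applyFst_eq_zero (fun y => ψX ∘ₗ mulLeft k y)
    (G.eq_zero_of_forall_ψX_mul_eq_zero φX ψX δX hδX hφX) _ fun y => ?_
  have hconj_left : ψX ∘ₗ mulRight k (δX * σX x * ↑δX⁻¹) = ψX ∘ₗ mulLeft k x :=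
    LinearMap.ext fun v => modular_of_right_mul_unit φX ψX δX hδX σX hσX v x
  have hconj_right : (ψX ∘ₗ mulLeft k y) ∘ₗ
      (mulLeft k (δX : X) ∘ₗ mulRight k (↑δX⁻¹ : X) ∘ₗ σX.toLinearMap) = ψX ∘ₗ mulRight k y :=
    LinearMap.ext fun v => by
      simpa [mul_assoc] using modular_of_right_mul_unit φX ψX δX hδX σX hσX y v
  rw [map_sub, sub_eq_zero, applyFst_map, hconj_right, G.applyFst_mulRight_α ψX hψX,
    ← hSinv (applyFst k (ψX ∘ₗ mulLeft k y) _), ← G.applyFst_mulRight_α ψX hψX, hconj_left]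
  simp [hSinv]

end Modular

theorem β_inv_antipode_σ (φX : X →ₗ[k] k)
    (hφX : ∀ x : X, applySnd k G.φ (G.α x) = φX x • (1 : X))
    (σ : A ≃ₐ[k] A) (hσ : ∀ a b : A, G.φ (a * b) = G.φ (b * σ a))
    (σX : X ≃ₐ[k] X) (hσX : ∀ x y : X, φX (y * σX x) = φX (x * y))
    (Sinv : A →ₗ[k] A) (hSinv : ∀ a : A, antipode k (Sinv a) = a) (a : A) :
    G.β (Sinv (σ a)) = TensorProduct.map σX.toLinearMap LinearMap.id
      (TensorProduct.comm k X X (G.β a)) := by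
  rw [← sub_eq_zero]
  refine eq_zero_of_forall_applyFst_eq_zero (fun z => φX ∘ₗ mulLeft k z)
    (G.eq_zero_of_forall_φX_mul_eq_zero φX hφX) _ fun z => ?_
  have hmod : (φX ∘ₗ mulLeft k z) ∘ₗ σX.toLinearMap = φX ∘ₗ mulRight k z :=
    LinearMap.ext fun v => hσX v z
  rw [map_sub, sub_eq_zero, G.applyFst_mulLeft_β φX hφX, hSinv, applyFst_map, applyFst_comm,
    hmod, G.applySnd_mulRight_β φX hφX, applySnd_one_tmul_mul_of_modular G.φ σ hσ, id_apply]

end GaloisContext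

end

theorem galois_object_sigma_prime_formulas_general
    {k : Type*} [Field k] {A X : Type*} [Ring A] [HopfAlgebra k A]
    [Ring X] [Algebra k X]
    (G : GaloisContext k A X)
    (φX : X →ₗ[k] k)
    (hφX : ∀ x : X, applySnd k G.φ (G.α x) = φX x • (1 : X))
    (ψX : X →ₗ[k] k)
    (hψX : ∀ x : X, applyFst k ψX (G.α x) = ψX x • (1 : A))
    (δX : Xˣ) (hδX : ∀ x : X, φX (x * δX) = ψX x)
    (σ : A ≃ₐ[k] A) (hσ : ∀ a b : A, G.φ (a * b) = G.φ (b * σ a))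
    (σX : X ≃ₐ[k] X) (hσX : ∀ x y : X, φX (y * σX x) = φX (x * y))
    (Sinv : A →ₗ[k] A)
    (hSinv₁ : ∀ a : A, Sinv (HopfAlgebra.antipode (R := k) (A := A) a) = a)
    (hSinv₂ : ∀ a : A, HopfAlgebra.antipode (R := k) (A := A) (Sinv a) = a) :
    (∀ x : X,
      G.α (↑δX * σX x * ↑δX⁻¹)
        = TensorProduct.map
            (LinearMap.mulLeft k (↑δX : X) ∘ₗ LinearMap.mulRight k (↑δX⁻¹ : X)
              ∘ₗ σX.toLinearMap)
            (Sinv ∘ₗ Sinv) (G.α x)) ∧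
    (∀ a : A,
      G.β (Sinv (σ a))
        = TensorProduct.map σX.toLinearMap LinearMap.id
            (TensorProduct.comm k X X (G.β a))) :=
  ⟨G.α_conj_σX φX ψX δX hδX σX hσX hφX hψX Sinv hSinv₁,
    G.β_inv_antipode_σ φX hφX σ hσ σX hσX Sinv hSinv₂⟩

theorem galois_object_sigma_prime_formulas
    {k : Type*} [Field k] {A X : Type*} [Ring A] [HopfAlgebra k A]
    [Ring X] [Algebra k X] [Nontrivial X]
    (G : GaloisContext k A X)
    (φX : X →ₗ[k] k)
    (hφX : ∀ x : X, applySnd k G.φ (G.α x) = φX x • (1 : X))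
    (ψX : X →ₗ[k] k) (hψX_ne : ψX ≠ 0)
    (hψX : ∀ x : X, applyFst k ψX (G.α x) = ψX x • (1 : A))
    (δX : Xˣ) (hδX : ∀ x : X, φX (x * δX) = ψX x)
    (σ : A ≃ₐ[k] A) (hσ : ∀ a b : A, G.φ (a * b) = G.φ (b * σ a))
    (σX : X ≃ₐ[k] X) (hσX : ∀ x y : X, φX (y * σX x) = φX (x * y))
    (Sinv : A →ₗ[k] A)
    (hSinv₁ : ∀ a : A, Sinv (HopfAlgebra.antipode (R := k) (A := A) a) = a)
    (hSinv₂ : ∀ a : A, HopfAlgebra.antipode (R := k) (A := A) (Sinv a) = a) :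
    (∀ x : X,
      G.α (↑δX * σX x * ↑δX⁻¹)
        = TensorProduct.map
            (LinearMap.mulLeft k (↑δX : X) ∘ₗ LinearMap.mulRight k (↑δX⁻¹ : X)
              ∘ₗ σX.toLinearMap)
            (Sinv ∘ₗ Sinv) (G.α x)) ∧
    (∀ a : A,
      G.β (Sinv (σ a))
        = TensorProduct.map σX.toLinearMap LinearMap.id
            (TensorProduct.comm k X X (G.β a))) :=
  galois_object_sigma_prime_formulas_general G φX hφX ψX hψX δX hδX σ hσ σX hσX Sinv hSinv₁ hSinv₂
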